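/- arXiv:1307.0360 — 3 statements merged into one kernel-verified Lean document; each statement's English description precedes it below -/
import Mathlib

section
/- For real q with 0 < q < 1 and integer n ≥ 1, the series ∑_{m=0}^{∞} q^m [m]_q^{n−1} converges and −β̃_{n,q}/n = (log q)/(q − 1) · ∑_{m=0}^{∞} q^m [m]_q^{n−1}, where β̃_{n,q} = (log q)/(1 − q)^{n+1} · ∑_{l=1}^{n} C(n,l) (−1)^{l−1} l (1 − q)/(1 − q^l) and [m]_q = (1 − q^m)/(1 − q). -/
/-- `-β̃_{n,q}/n = (log q)/(q-1) · ∑_{m≥0} q^m [m]_q^{n-1}` for `0 < q < 1`. -/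
theorem stmt4 (q : ℝ) (h0 : 0 < q) (h1 : q < 1) (n : ℕ) (hn : 1 ≤ n) :
    Summable (fun m : ℕ => q ^ m * ((1 - q ^ m) / (1 - q)) ^ (n - 1)) ∧
    -(Real.log q / (1 - q) ^ (n + 1) *
        ∑ l ∈ Finset.Icc 1 n, (n.choose l : ℝ) * (-1) ^ (l - 1) * l * (1 - q) / (1 - q ^ l)) / n =
      Real.log q / (q - 1) * ∑' m : ℕ, q ^ m * ((1 - q ^ m) / (1 - q)) ^ (n - 1) := by
  obtain ⟨r, rfl⟩ : ∃ r, n = r + 1 := ⟨n - 1, (Nat.succ_pred_eq_of_pos hn).symm⟩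
  have hq1 : (1:ℝ) - q ≠ 0 := by linarith
  have hqk : ∀ k : ℕ, (1:ℝ) - q ^ (k + 1) ≠ 0 := by
    intro k
    have : q ^ (k + 1) < 1 := pow_lt_one₀ h0.le h1 (Nat.succ_ne_zero k)
    linarith
  -- pointwise binomial expansion
  have key : ∀ m : ℕ, q ^ m * ((1 - q ^ m) / (1 - q)) ^ (r + 1 - 1) =
      ∑ k ∈ Finset.range (r + 1),
        ((r.choose k : ℝ) * (-1) ^ k / (1 - q) ^ r) * (q ^ (k + 1)) ^ m := by
    intro m
    simp only [Nat.add_sub_cancel, div_pow]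
    have hb : (1 - q ^ m) ^ r
        = ∑ k ∈ Finset.range (r + 1), (-(q ^ m)) ^ k * (r.choose k : ℝ) := by
      have h := add_pow (-(q ^ m)) 1 r
      simp only [one_pow, mul_one] at h
      rw [sub_eq_neg_add]
      simpa using h
    rw [hb, Finset.sum_div, Finset.mul_sum]
    refine Finset.sum_congr rfl fun k _ => ?_
    rw [neg_pow, ← pow_mul, ← pow_mul]
    ring
  have hsk : ∀ k ∈ Finset.range (r + 1),
      Summable (fun m : ℕ => ((r.choose k : ℝ) * (-1) ^ k / (1 - q) ^ r) * (q ^ (k + 1)) ^ m) := by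
    intro k _
    exact (summable_geometric_of_lt_one (pow_nonneg h0.le _)
      (pow_lt_one₀ h0.le h1 (Nat.succ_ne_zero k))).mul_left _
  have hsum : Summable (fun m : ℕ => q ^ m * ((1 - q ^ m) / (1 - q)) ^ (r + 1 - 1)) := by
    rw [funext key]
    exact summable_sum hsk
  refine ⟨hsum, ?_⟩
  have htsum : (∑' m : ℕ, q ^ m * ((1 - q ^ m) / (1 - q)) ^ (r + 1 - 1))
      = ∑ k ∈ Finset.range (r + 1),
          ((r.choose k : ℝ) * (-1) ^ k / (1 - q) ^ r) * (1 - q ^ (k + 1))⁻¹ := by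
    rw [funext key, Summable.tsum_finsetSum hsk]
    refine Finset.sum_congr rfl fun k _ => ?_
    rw [tsum_mul_left, tsum_geometric_of_lt_one (pow_nonneg h0.le _)
      (pow_lt_one₀ h0.le h1 (Nat.succ_ne_zero k))]
  rw [htsum]
  rw [show Finset.Icc 1 (r + 1) = Finset.Ico 1 (r + 2) by rfl,
    Finset.sum_Ico_eq_sum_range]
  rw [Finset.mul_sum, Finset.mul_sum, neg_div, Finset.sum_div, ← Finset.sum_neg_distrib]
  refine Finset.sum_congr rfl fun k _ => ?_
  simp only [add_comm 1 k, Nat.add_sub_cancel]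
  have hk1 : ((k : ℝ) + 1) ≠ 0 := by positivity
  have hrq : ((r : ℝ) + 1) ≠ 0 := by positivity
  have hC : (((r + 1).choose (k + 1) : ℕ) : ℝ) = ((r:ℝ)+1) * (r.choose k : ℝ) / ((k:ℝ)+1) := by
    rw [eq_div_iff hk1]
    have := congrArg (Nat.cast : ℕ → ℝ) (Nat.add_one_mul_choose_eq r k)
    push_cast at this
    linarith [this]
  push_cast
  rw [hC]
  have hpow : ((1:ℝ) - q) ^ r ≠ 0 := pow_ne_zero _ hq1
  have hq1' : q - 1 ≠ 0 := by intro h; apply hq1; linarith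
  have hk2 : (1:ℝ) - q ^ (k + 1) ≠ 0 := hqk k
  field_simp
  ring
end

section
/- Let p be a prime and f : ℤ_p → ℂ_p a uniformly differentiable function. Then the Volkenborn integral I_0(f) = lim_{N→∞} p^{−N} ∑_{x=0}^{p^N−1} f(x) satisfies the valuation bound ν_p(I_0(f)) ≥ ν(f) − 1, where ν(f) = min{ inf_{x} ν_p(f(x)), inf_{x≠y} ν_p((f(x) − f(y))/(x − y)) }. -/
/-!
Writing `S_N = ∑_{x < p^N} f x`, split `range (p^(N+1))` into the `p` blocks `i p^N + j`, `j < p^N`.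
Then `S_{N+1} - p S_N = ∑_{i, j} (f (i p^N + j) - f j)`, and each summand has norm at most
`C ‖i p^N‖ ≤ C p^{-N}`, so by the ultrametric inequality consecutive Riemann sums
`p^{-N} S_N` differ by at most `p^{N+1} · C p^{-N} = p C`. Since the first one is `f 0`, all of them,
and hence their limit, have norm at most `p C`.
-/

open Filter Finset

theorem Finset.sum_range_mul {M : Type*} [AddCommMonoid M] (g : ℕ → M) (m n : ℕ) :
    ∑ x ∈ range (m * n), g x = ∑ i ∈ range m, ∑ j ∈ range n, g (i * n + j) := by
  induction m with
  | zero => simp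
  | succ m ih => rw [Nat.succ_mul, sum_range_add, ih, sum_range_succ]

theorem Finset.sum_range_mul_sub_nsmul {M : Type*} [AddCommGroup M] (g : ℕ → M) (m n : ℕ) :
    ∑ x ∈ range (m * n), g x - m • ∑ x ∈ range n, g x
      = ∑ i ∈ range m, ∑ j ∈ range n, (g (i * n + j) - g j) := by
  simp only [sum_range_mul, sum_sub_distrib, sum_const, card_range]

namespace PadicInt

variable {p : ℕ} [Fact p.Prime]

theorem norm_natCast_mul_pow_add_sub_le (i j N : ℕ) :
    ‖((i * p ^ N + j : ℕ) : ℤ_[p]) - (j : ℤ_[p])‖ ≤ ((p : ℝ) ^ N)⁻¹ := by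
  have hdiff : ((i * p ^ N + j : ℕ) : ℤ_[p]) - (j : ℤ_[p]) = (i : ℤ_[p]) * (p : ℤ_[p]) ^ N := by
    push_cast; ring
  rw [hdiff, norm_mul, norm_pow, norm_p, inv_pow]
  exact mul_le_of_le_one_left (by positivity) (norm_le_one _)

theorem norm_sum_range_pow_succ_sub_le {E : Type*} [SeminormedAddCommGroup E]
    [IsUltrametricDist E] {f : ℤ_[p] → E} {C : ℝ} (hC : 0 ≤ C)
    (hf : ∀ x y, ‖f x - f y‖ ≤ C * ‖x - y‖) (N : ℕ) :
    ‖∑ x ∈ range (p ^ (N + 1)), f x - p • ∑ x ∈ range (p ^ N), f x‖ ≤ C * ((p : ℝ) ^ N)⁻¹ := by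
  rw [pow_succ', sum_range_mul_sub_nsmul (fun x : ℕ => f x)]
  refine IsUltrametricDist.norm_sum_le_of_forall_le_of_nonneg (by positivity) fun i _ => ?_
  refine IsUltrametricDist.norm_sum_le_of_forall_le_of_nonneg (by positivity) fun j _ => ?_
  exact (hf _ _).trans (mul_le_mul_of_nonneg_left (norm_natCast_mul_pow_add_sub_le i j N) hC)

end PadicInt

section Volkenborn

variable {p : ℕ} [Fact p.Prime] {K : Type*}

noncomputable def volkenbornSum [DivisionRing K] (p : ℕ) [Fact p.Prime] (f : ℤ_[p] → K)
    (N : ℕ) : K :=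
  ((p : K) ^ N)⁻¹ * ∑ x ∈ range (p ^ N), f x

variable [NormedField K] [NormedAlgebra ℚ_[p] K]

theorem norm_natCast_prime_of_normedAlgebra : ‖(p : K)‖ = (p : ℝ)⁻¹ := by
  rw [← map_natCast (algebraMap ℚ_[p] K) p, norm_algebraMap', Padic.norm_p]

theorem norm_sub_le_of_norm_div_sub_le {f : ℤ_[p] → K} {C : ℝ}
    (hf : ∀ x y : ℤ_[p], x ≠ y →
      ‖(f x - f y) / algebraMap ℚ_[p] K ((x : ℚ_[p]) - (y : ℚ_[p]))‖ ≤ C)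
    (x y : ℤ_[p]) : ‖f x - f y‖ ≤ C * ‖x - y‖ := by
  rcases eq_or_ne x y with rfl | hxy
  · simp
  have hxy' : algebraMap ℚ_[p] K ((x : ℚ_[p]) - (y : ℚ_[p])) ≠ 0 := by
    simpa [sub_eq_zero] using mt Subtype.ext hxy
  have hnorm : ‖algebraMap ℚ_[p] K ((x : ℚ_[p]) - (y : ℚ_[p]))‖ = ‖x - y‖ := by
    rw [norm_algebraMap', ← PadicInt.coe_sub, PadicInt.padic_norm_e_of_padicInt]
  calc ‖f x - f y‖
      = ‖(f x - f y) / algebraMap ℚ_[p] K ((x : ℚ_[p]) - (y : ℚ_[p]))‖ * ‖x - y‖ := by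
        rw [← hnorm, ← norm_mul, div_mul_cancel₀ _ hxy']
    _ ≤ C * ‖x - y‖ := mul_le_mul_of_nonneg_right (hf x y hxy) (norm_nonneg _)

theorem volkenbornSum_succ (f : ℤ_[p] → K) (N : ℕ) :
    volkenbornSum p f (N + 1) = volkenbornSum p f N
      + ((p : K) ^ (N + 1))⁻¹ * (∑ x ∈ range (p ^ (N + 1)), f x - p • ∑ x ∈ range (p ^ N), f x) := by
  have hp : (p : K) ≠ 0 := by
    rw [← norm_ne_zero_iff, norm_natCast_prime_of_normedAlgebra]
    exact inv_ne_zero (Nat.cast_ne_zero.mpr (Fact.out : p.Prime).ne_zero)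
  simp only [volkenbornSum, nsmul_eq_mul]
  field_simp
  ring

theorem norm_volkenbornSum_le {f : ℤ_[p] → K} {C : ℝ} (hC : 0 ≤ C) (hf0 : ‖f 0‖ ≤ C)
    (hf : ∀ x y, ‖f x - f y‖ ≤ C * ‖x - y‖) (N : ℕ) : ‖volkenbornSum p f N‖ ≤ p * C := by
  have : IsUltrametricDist K := IsUltrametricDist.of_normedAlgebra ℚ_[p]
  have hp : (1 : ℝ) ≤ p := Nat.one_le_cast.mpr (Fact.out : p.Prime).one_lt.le
  induction N with
  | zero => simpa [volkenbornSum] using hf0.trans (le_mul_of_one_le_left hC hp)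
  | succ N ih =>
    rw [volkenbornSum_succ]
    refine (IsUltrametricDist.norm_add_le_max _ _).trans (max_le ih ?_)
    calc ‖((p : K) ^ (N + 1))⁻¹ * (∑ x ∈ range (p ^ (N + 1)), f x - p • ∑ x ∈ range (p ^ N), f x)‖
        ≤ (p : ℝ) ^ (N + 1) * (C * ((p : ℝ) ^ N)⁻¹) := by
          rw [norm_mul, norm_inv, norm_pow, norm_natCast_prime_of_normedAlgebra, inv_pow, inv_inv]
          exact mul_le_mul_of_nonneg_left
            (PadicInt.norm_sum_range_pow_succ_sub_le hC hf N) (by positivity)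
      _ = p * C := by field_simp; ring

end Volkenborn

theorem stmt12_general (p : ℕ) [Fact p.Prime] {K : Type*} [NontriviallyNormedField K]
    [NormedAlgebra ℚ_[p] K]
    (f : ℤ_[p] → K) (C : ℝ)
    (hfb : ∀ x : ℤ_[p], ‖f x‖ ≤ C)
    (hfd : ∀ x y : ℤ_[p], x ≠ y →
      ‖(f x - f y) / algebraMap ℚ_[p] K ((x : ℚ_[p]) - (y : ℚ_[p]))‖ ≤ C)
    (I : K)
    (hI : Tendsto (fun N : ℕ => ((p : K) ^ N)⁻¹ * ∑ x ∈ Finset.range (p ^ N), f (x : ℤ_[p]))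
      atTop (nhds I)) :
    ‖I‖ ≤ p * C :=
  le_of_tendsto' hI.norm <| norm_volkenbornSum_le ((norm_nonneg _).trans (hfb 0)) (hfb 0)
    (norm_sub_le_of_norm_div_sub_le hfd)

/-- Valuation bound for the Volkenborn integral: `ν_p(I_0(f)) ≥ ν(f) - 1`, stated
multiplicatively: if `‖f‖ ≤ C` and all difference quotients of `f` have norm `≤ C`
(i.e. `ν(f) ≥ -log_p C`), then `‖I_0(f)‖ ≤ p·C`. -/
theorem stmt12 (p : ℕ) [Fact p.Prime] {K : Type*} [NontriviallyNormedField K]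
    [NormedAlgebra ℚ_[p] K] [CompleteSpace K]
    (f : ℤ_[p] → K) (C : ℝ)
    (hfb : ∀ x : ℤ_[p], ‖f x‖ ≤ C)
    (hfd : ∀ x y : ℤ_[p], x ≠ y →
      ‖(f x - f y) / algebraMap ℚ_[p] K ((x : ℚ_[p]) - (y : ℚ_[p]))‖ ≤ C)
    (I : K)
    (hI : Tendsto (fun N : ℕ => ((p : K) ^ N)⁻¹ * ∑ x ∈ Finset.range (p ^ N), f (x : ℤ_[p]))
      atTop (nhds I)) :
    ‖I‖ ≤ p * C :=
  stmt12_general p f C hfb hfd I hI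
end

section
/- Let p be a prime, f, g : ℤ_p → ℂ_p continuous, and define (f ⊛ g)(n) = ∑_{i=0}^{n} f(i) g(n − i) for n ∈ ℕ. If f and g are uniformly continuous (automatic on compact ℤ_p), then f ⊛ g extends uniquely to a continuous function on ℤ_p; equivalently, the map n ↦ ∑_{i=0}^{n} f(i)g(n−i) defined on ℕ is uniformly continuous with respect to the p-adic metric. -/
/-!
For `n ≤ m ≡ n (mod p^{2k})` write `m = n + q p^k` with `p^k ∣ q`. The difference `S(m) - S(n)`
of convolution sums splits into the terms `f(i) (g(m - i) - g(n - i))`, `i ≤ n`, each small by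
the Lipschitz bound on `g`, and the tail `∑_{j < q p^k} f(n + 1 + j) g(q p^k - 1 - j)`. In the
tail, replacing `j` by `j mod p^k` moves each term by at most `L p^{-k}`, and what remains is `q`
copies of one block of `p^k` terms, whose sum has norm at most `|q|_p ≤ p^{-k}`. The ultrametric
inequality turns these termwise bounds into bounds for the sums.
-/

open Finset IsUltrametricDist

theorem Finset.sum_range_mul_mod {M : Type*} [AddCommMonoid M] (F : ℕ → M) (q d : ℕ) :
    ∑ j ∈ range (q * d), F (j % d) = q • ∑ s ∈ range d, F s := by
  induction q with
  | zero => simp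
  | succ q ih =>
    rw [Nat.succ_mul, sum_range_add, ih, succ_nsmul]
    congr 1
    refine sum_congr rfl fun j hj => ?_
    rw [Nat.mul_add_mod_self_right, Nat.mod_eq_of_lt (mem_range.mp hj)]

section Ultrametric

variable {K : Type*} [NormedRing K] [IsUltrametricDist K]

theorem norm_sum_range_mul_le_max (F : ℕ → K) (q d : ℕ) {B : ℝ} (hB : 0 ≤ B)
    (hF : ∀ j < q * d, ‖F j - F (j % d)‖ ≤ B) :
    ‖∑ j ∈ range (q * d), F j‖ ≤ max B (‖(q : K)‖ * ‖∑ s ∈ range d, F s‖) := by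
  have hsplit : ∑ j ∈ range (q * d), F j =
      ∑ j ∈ range (q * d), (F j - F (j % d)) + (q : K) * ∑ s ∈ range d, F s := by
    rw [← nsmul_eq_mul, ← sum_range_mul_mod, ← sum_add_distrib]
    simp only [sub_add_cancel]
  rw [hsplit]
  refine (norm_add_le_max _ _).trans (max_le_max ?_ (norm_mul_le _ _))
  exact norm_sum_le_of_forall_le_of_nonneg hB fun j hj => hF j (mem_range.mp hj)

theorem LipschitzWith.norm_mul_sub_mul_le {α : Type*} [PseudoMetricSpace α] {f g : α → K}
    {L : NNReal} (hf : LipschitzWith L f) (hg : LipschitzWith L g) (hfb : ∀ x, ‖f x‖ ≤ 1)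
    (hgb : ∀ y, ‖g y‖ ≤ 1) (x x' y y' : α) :
    ‖f x * g y - f x' * g y'‖ ≤ L * max (dist x x') (dist y y') := by
  have hsplit : f x * g y - f x' * g y' = (f x - f x') * g y + f x' * (g y - g y') := by
    noncomm_ring
  rw [hsplit, mul_max_of_nonneg _ _ L.coe_nonneg]
  refine (norm_add_le_max _ _).trans (max_le_max ?_ ?_)
  · calc ‖(f x - f x') * g y‖ ≤ ‖f x - f x'‖ * 1 :=
          (norm_mul_le _ _).trans (mul_le_mul_of_nonneg_left (hgb y) (norm_nonneg _))
      _ ≤ L * dist x x' := by rw [mul_one, ← dist_eq_norm]; exact hf.dist_le_mul x x'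
  · calc ‖f x' * (g y - g y')‖ ≤ 1 * ‖g y - g y'‖ :=
          (norm_mul_le _ _).trans (mul_le_mul_of_nonneg_right (hfb x') (norm_nonneg _))
      _ ≤ L * dist y y' := by rw [one_mul, ← dist_eq_norm]; exact hg.dist_le_mul y y'

end Ultrametric

section Padic

variable {p : ℕ} [Fact p.Prime]

theorem PadicInt.dist_natCast_le_of_modEq {k a b : ℕ} (h : a ≡ b [MOD p ^ k]) :
    dist (a : ℤ_[p]) b ≤ (p : ℝ) ^ (-(k : ℤ)) := by
  rw [dist_comm, dist_eq_norm]
  exact_mod_cast norm_int_le_pow_iff_dvd.mpr (by exact_mod_cast h.dvd)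

theorem norm_natCast_le_of_pow_dvd (K : Type*) [NormedRing K] [NormOneClass K]
    [NormedAlgebra ℚ_[p] K] {k c : ℕ} (h : p ^ k ∣ c) :
    ‖(c : K)‖ ≤ (p : ℝ) ^ (-(k : ℤ)) := by
  rw [← map_natCast (algebraMap ℚ_[p] K), norm_algebraMap']
  exact_mod_cast (Padic.norm_int_le_pow_iff_dvd c k).mpr (by exact_mod_cast h)

end Padic

section Convolution

variable {p : ℕ} [Fact p.Prime] {K : Type*} [NormedRing K] [NormOneClass K]
  [NormedAlgebra ℚ_[p] K] [IsUltrametricDist K] {f g : ℤ_[p] → K} {L : NNReal}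

noncomputable def natConvolution (f g : ℤ_[p] → K) (n : ℕ) : K :=
  ∑ i ∈ range (n + 1), f (i : ℤ_[p]) * g ((n - i : ℕ) : ℤ_[p])

theorem norm_sum_range_mul_pow_le (hf : LipschitzWith L f) (hg : LipschitzWith L g)
    (hfb : ∀ x, ‖f x‖ ≤ 1) (hgb : ∀ y, ‖g y‖ ≤ 1) (a : ℕ) {k q : ℕ} (hq : p ^ k ∣ q) :
    ‖∑ j ∈ range (q * p ^ k), f ((a + j : ℕ) : ℤ_[p]) * g ((q * p ^ k - 1 - j : ℕ) : ℤ_[p])‖ ≤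
      max (L : ℝ) 1 * (p : ℝ) ^ (-(k : ℤ)) := by
  set F : ℕ → K := fun j => f ((a + j : ℕ) : ℤ_[p]) * g ((q * p ^ k - 1 - j : ℕ) : ℤ_[p])
  have hF : ∀ j < q * p ^ k, ‖F j - F (j % p ^ k)‖ ≤ L * (p : ℝ) ^ (-(k : ℤ)) := by
    intro j hj
    have hmod : j ≡ j % p ^ k [MOD p ^ k] := (Nat.mod_modEq j _).symm
    have hjmod : j % p ^ k ≤ j := Nat.mod_le j _
    refine (hf.norm_mul_sub_mul_le hg hfb hgb _ _ _ _).trans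
      (mul_le_mul_of_nonneg_left (max_le ?_ ?_) L.coe_nonneg)
    · exact PadicInt.dist_natCast_le_of_modEq (hmod.add_left a)
    · exact PadicInt.dist_natCast_le_of_modEq (Nat.ModEq.sub_left (by omega) (by omega) hmod)
  have hblock : ‖∑ s ∈ range (p ^ k), F s‖ ≤ 1 :=
    norm_sum_le_of_forall_le_of_nonneg zero_le_one fun s _ =>
      (norm_mul_le _ _).trans (mul_le_one₀ (hfb _) (norm_nonneg _) (hgb _))
  calc ‖∑ j ∈ range (q * p ^ k), F j‖
      ≤ max (L * (p : ℝ) ^ (-(k : ℤ))) (‖(q : K)‖ * ‖∑ s ∈ range (p ^ k), F s‖) :=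
        norm_sum_range_mul_le_max F q (p ^ k) (by positivity) hF
    _ ≤ max (L * (p : ℝ) ^ (-(k : ℤ))) ((p : ℝ) ^ (-(k : ℤ)) * 1) := by
        gcongr
        exact norm_natCast_le_of_pow_dvd K hq
    _ = max (L : ℝ) 1 * (p : ℝ) ^ (-(k : ℤ)) := by
        rw [mul_one, max_mul_of_nonneg _ _ (by positivity), one_mul]

theorem norm_natConvolution_add_sub_le (hf : LipschitzWith L f) (hg : LipschitzWith L g)
    (hfb : ∀ x, ‖f x‖ ≤ 1) (hgb : ∀ y, ‖g y‖ ≤ 1) (n : ℕ) {k q : ℕ} (hq : p ^ k ∣ q) :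
    ‖natConvolution f g (n + q * p ^ k) - natConvolution f g n‖ ≤
      max (L : ℝ) 1 * (p : ℝ) ^ (-(k : ℤ)) := by
  set t := q * p ^ k
  have hsplit : natConvolution f g (n + t) =
      ∑ i ∈ range (n + 1), f (i : ℤ_[p]) * g ((n + t - i : ℕ) : ℤ_[p]) +
        ∑ j ∈ range t, f ((n + 1 + j : ℕ) : ℤ_[p]) * g ((t - 1 - j : ℕ) : ℤ_[p]) := by
    rw [natConvolution, Nat.add_right_comm, sum_range_add]
    congr 1
    refine sum_congr rfl fun j _ => ?_
    rw [show n + t - (n + 1 + j) = t - 1 - j by omega]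
  have hhead : ‖∑ i ∈ range (n + 1),
      (f (i : ℤ_[p]) * g ((n + t - i : ℕ) : ℤ_[p]) - f (i : ℤ_[p]) * g ((n - i : ℕ) : ℤ_[p]))‖ ≤
        max (L : ℝ) 1 * (p : ℝ) ^ (-(k : ℤ)) := by
    refine norm_sum_le_of_forall_le_of_nonneg (by positivity) fun i hi => ?_
    have hmod : n + t - i ≡ n - i [MOD p ^ k] := by
      rw [show n + t - i = n - i + q * p ^ k by have := mem_range.mp hi; omega]
      exact Nat.add_mul_mod_self_right _ _ _
    calc _ ≤ L * max (dist (i : ℤ_[p]) i) (dist ((n + t - i : ℕ) : ℤ_[p]) ((n - i : ℕ) : ℤ_[p])) :=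
          hf.norm_mul_sub_mul_le hg hfb hgb _ _ _ _
      _ ≤ max (L : ℝ) 1 * (p : ℝ) ^ (-(k : ℤ)) := by
          rw [dist_self]
          gcongr
          · exact le_max_left _ _
          · exact max_le (by positivity) (PadicInt.dist_natCast_le_of_modEq hmod)
  rw [hsplit, natConvolution, add_sub_right_comm, ← sum_sub_distrib]
  exact (norm_add_le_max _ _).trans (max_le hhead (norm_sum_range_mul_pow_le hf hg hfb hgb _ hq))

theorem norm_natConvolution_sub_le_of_modEq (hf : LipschitzWith L f) (hg : LipschitzWith L g)
    (hfb : ∀ x, ‖f x‖ ≤ 1) (hgb : ∀ y, ‖g y‖ ≤ 1) {k m n : ℕ} (h : m ≡ n [MOD p ^ (2 * k)]) :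
    ‖natConvolution f g m - natConvolution f g n‖ ≤ max (L : ℝ) 1 * (p : ℝ) ^ (-(k : ℤ)) := by
  wlog hnm : n ≤ m generalizing m n
  · rw [norm_sub_rev]
    exact this h.symm (by omega)
  obtain ⟨c, hc⟩ := (Nat.modEq_iff_dvd' hnm).mp h.symm
  have hm : m = n + p ^ k * c * p ^ k := by
    rw [two_mul, pow_add] at hc
    rw [mul_right_comm, ← hc]
    omega
  rw [hm]
  exact norm_natConvolution_add_sub_le hf hg hfb hgb n (dvd_mul_right _ _)

end Convolution

theorem stmt15_general (p : ℕ) [Fact p.Prime] {K : Type*} [NontriviallyNormedField K]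
    [NormedAlgebra ℚ_[p] K]
    (f g : ℤ_[p] → K) (Lf Lg : NNReal)
    (hf : LipschitzWith Lf f) (hg : LipschitzWith Lg g)
    (hfb : ∀ x : ℤ_[p], ‖f x‖ ≤ 1) (hgb : ∀ x : ℤ_[p], ‖g x‖ ≤ 1) :
    ∀ ε > (0 : ℝ), ∃ N : ℕ, ∀ m n : ℕ, m ≡ n [MOD p ^ N] →
      ‖(∑ i ∈ Finset.range (m + 1), f (i : ℤ_[p]) * g ((m - i : ℕ) : ℤ_[p])) -
        ∑ i ∈ Finset.range (n + 1), f (i : ℤ_[p]) * g ((n - i : ℕ) : ℤ_[p])‖ < ε := by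
  intro ε hε
  have : IsUltrametricDist K := IsUltrametricDist.of_normedAlgebra ℚ_[p]
  set C : ℝ := max ((max Lf Lg : NNReal) : ℝ) 1
  have hC : 0 < C := lt_max_of_lt_right one_pos
  obtain ⟨k, hk⟩ := PadicInt.exists_pow_neg_lt p (div_pos hε hC)
  refine ⟨2 * k, fun m n h => ?_⟩
  calc _ ≤ C * (p : ℝ) ^ (-(k : ℤ)) :=
        norm_natConvolution_sub_le_of_modEq (hf.weaken (le_max_left _ _))
          (hg.weaken (le_max_right _ _)) hfb hgb h
    _ < ε := (lt_div_iff₀' hC).mp hk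

/-- For Lipschitz, norm-bounded `f, g : ℤ_p → ℂ_p`, the convolution sequence
`n ↦ ∑_{i=0}^n f(i) g(n-i)` is uniformly continuous for the p-adic metric on `ℕ`,
hence extends continuously to `ℤ_p`. -/
theorem stmt15 (p : ℕ) [Fact p.Prime] {K : Type*} [NontriviallyNormedField K]
    [NormedAlgebra ℚ_[p] K] [CompleteSpace K]
    (f g : ℤ_[p] → K) (Lf Lg : NNReal)
    (hf : LipschitzWith Lf f) (hg : LipschitzWith Lg g)
    (hfb : ∀ x : ℤ_[p], ‖f x‖ ≤ 1) (hgb : ∀ x : ℤ_[p], ‖g x‖ ≤ 1) :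
    ∀ ε > (0 : ℝ), ∃ N : ℕ, ∀ m n : ℕ, m ≡ n [MOD p ^ N] →
      ‖(∑ i ∈ Finset.range (m + 1), f (i : ℤ_[p]) * g ((m - i : ℕ) : ℤ_[p])) -
        ∑ i ∈ Finset.range (n + 1), f (i : ℤ_[p]) * g ((n - i : ℕ) : ℤ_[p])‖ < ε :=
  stmt15_general p f g Lf Lg hf hg hfb hgb
end
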